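/- For r < 0, the vector field F(x,y,z) = (−y² − yz, (r x/(r−1))(y+z), (−x/(r−1))(y+z)) on ℝ³ admits the first integral I(x,y,z) = x² + (1/(r(r−1)))·((r−1)²y² + (y+rz)²), which is positive-definite; hence F is a complete vector field. -/

import Mathlib

/-!
For `r < 0` the first integral `I` is a positive-definite quadratic form, so its level sets are
bounded. Since `dI · F = 0`, `I` is also conserved along solutions of `χ • F` for any scalar
function `χ`. Taking for `χ` a Lipschitz cutoff equal to `1` on a ball containing the level set of
the initial point makes `χ • F` bounded and globally Lipschitz, so its solutions exist for all
time (Picard–Lindelöf on `[-T, T]`, glued by uniqueness). Conservation of `I` keeps such a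
solution inside the ball, where it is a solution of `F`.
-/

open Set Metric NNReal

/-- The geodesic field `F₄ᵣ` of `Q₄ᵣ` on `aff(ℝ) ⊕ ℝ` (`λ = 0`). -/
noncomputable def F4r (r : ℝ) (v : Fin 3 → ℝ) : Fin 3 → ℝ :=
  ![-(v 1) ^ 2 - v 1 * v 2, r * v 0 / (r - 1) * (v 1 + v 2), -v 0 / (r - 1) * (v 1 + v 2)]

section Cutoff

variable {E : Type*} [NormedAddCommGroup E]

def normCutoff (R : ℝ) (x : E) : ℝ := max 0 (min 1 (R + 1 - ‖x‖))

theorem lipschitzWith_normCutoff (R : ℝ) : LipschitzWith 1 (normCutoff (E := E) R) := by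
  have hshift : LipschitzWith 1 fun t : ℝ ↦ R + 1 - t :=
    LipschitzWith.of_dist_le_mul fun a b ↦ by rw [NNReal.coe_one, one_mul, dist_sub_left]
  have h := ((hshift.const_min 1).const_max 0).comp (lipschitzWith_one_norm (E := E))
  rw [mul_one] at h
  exact h

theorem abs_normCutoff_le_one (R : ℝ) (x : E) : |normCutoff R x| ≤ 1 := by
  rw [normCutoff, abs_of_nonneg (le_max_left _ _)]
  exact max_le zero_le_one (min_le_left _ _)

theorem normCutoff_eq_zero_of_notMem_closedBall {R : ℝ} {x : E}
    (hx : x ∉ closedBall 0 (R + 1)) :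
    normCutoff R x = 0 := by
  rw [mem_closedBall_zero_iff, not_le] at hx
  exact max_eq_left (min_le_of_right_le (by linarith))

theorem normCutoff_eq_one_of_norm_le {R : ℝ} {x : E} (hx : ‖x‖ ≤ R) :
    normCutoff R x = 1 := by
  rw [normCutoff, min_eq_left (by linarith), max_eq_right zero_le_one]

end Cutoff

variable {E : Type*} [NormedAddCommGroup E] [NormedSpace ℝ E] {v : E → E}

theorem hasDerivAt_comp_of_fderiv_apply_eq_zero {I : E → ℝ} {γ : ℝ → E} {t c : ℝ}
    (hI : DifferentiableAt ℝ I (γ t)) (hIv : fderiv ℝ I (γ t) (v (γ t)) = 0)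
    (hγ : HasDerivAt γ (c • v (γ t)) t) : HasDerivAt (I ∘ γ) 0 t := by
  simpa [hIv] using hI.hasFDerivAt.comp_hasDerivAt t hγ

theorem lipschitzWith_smul_of_eq_zero_of_notMem {χ : E → ℝ} {K₁ K₂ C : ℝ≥0} {s : Set E}
    (hχ : LipschitzWith K₁ χ) (hχ₁ : ∀ x, |χ x| ≤ 1) (hχ₀ : ∀ x ∉ s, χ x = 0)
    (hv : LipschitzOnWith K₂ v s) (hC : ∀ x ∈ s, ‖v x‖ ≤ C) :
    LipschitzWith (K₁ * C + K₂) (fun x ↦ χ x • v x) := by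
  refine LipschitzWith.of_dist_le_mul fun x y ↦ ?_
  wlog hx : x ∈ s generalizing x y
  · by_cases hy : y ∈ s
    · simpa only [dist_comm] using this y x hy
    · simp only [hχ₀ x hx, hχ₀ y hy, zero_smul, dist_self, NNReal.coe_add, NNReal.coe_mul]
      positivity
  have hsecond : ‖χ y • (v x - v y)‖ ≤ K₂ * dist x y := by
    by_cases hy : y ∈ s
    · rw [norm_smul, Real.norm_eq_abs, ← dist_eq_norm]
      calc |χ y| * dist (v x) (v y) ≤ 1 * (K₂ * dist x y) :=
            mul_le_mul (hχ₁ y) (hv.dist_le_mul x hx y hy) dist_nonneg zero_le_one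
        _ = K₂ * dist x y := one_mul _
    · simp only [hχ₀ y hy, zero_smul, norm_zero]
      positivity
  have hfirst : ‖(χ x - χ y) • v x‖ ≤ K₁ * C * dist x y := by
    rw [norm_smul, Real.norm_eq_abs, ← Real.dist_eq, mul_right_comm]
    exact mul_le_mul (hχ.dist_le_mul x y) (hC x hx) (norm_nonneg _) (by positivity)
  calc dist (χ x • v x) (χ y • v y) = ‖(χ x - χ y) • v x + χ y • (v x - v y)‖ := by
        rw [dist_eq_norm, sub_smul, smul_sub]; abel_nf
    _ ≤ K₁ * C * dist x y + K₂ * dist x y :=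
        (norm_add_le _ _).trans (add_le_add hfirst hsecond)
    _ = ↑(K₁ * C + K₂) * dist x y := by push_cast; ring

theorem exists_forall_abs_lt_hasDerivAt_of_lipschitzWith [CompleteSpace E] {K C : ℝ≥0}
    (hv : LipschitzWith K v) (hC : ∀ x, ‖v x‖ ≤ C) (x₀ : E) (T : ℝ) :
    ∃ γ : ℝ → E, γ 0 = x₀ ∧ ∀ t, |t| < T → HasDerivAt γ (v (γ t)) t := by
  have hPL : IsPicardLindelof (fun _ ↦ v) (tmin := -|T|) (tmax := |T|)
      ⟨0, by simp⟩ x₀ (C * ‖T‖₊) 0 C K :=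
    .of_time_independent (fun x _ ↦ hC x) hv.lipschitzOnWith (by simp)
  obtain ⟨γ, hγ₀, hγ⟩ := hPL.exists_eq_forall_mem_Icc_hasDerivWithinAt₀
  refine ⟨γ, hγ₀, fun t ht ↦ ?_⟩
  have ht' : t ∈ Ioo (-|T|) |T| := by
    rw [mem_Ioo, ← abs_lt]; exact ht.trans_le (le_abs_self T)
  exact (hγ t (Ioo_subset_Icc_self ht')).hasDerivAt (Icc_mem_nhds ht'.1 ht'.2)

theorem exists_hasDerivAt_of_lipschitzWith [CompleteSpace E] {K C : ℝ≥0}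
    (hv : LipschitzWith K v) (hC : ∀ x, ‖v x‖ ≤ C) (x₀ : E) :
    ∃ γ : ℝ → E, γ 0 = x₀ ∧ ∀ t, HasDerivAt γ (v (γ t)) t := by
  choose γ hγ₀ hγ using exists_forall_abs_lt_hasDerivAt_of_lipschitzWith hv hC x₀
  have agree : ∀ T T' s, |s| < T → |s| < T' → γ T s = γ T' s := by
    intro T T' s hT hT'
    have hIoo : ∀ {t}, t ∈ Ioo (-min T T') (min T T') ↔ |t| < min T T' := by
      simp only [mem_Ioo, abs_lt, implies_true]
    refine ODE_solution_unique_of_mem_Ioo (v := fun _ ↦ v) (s := fun _ ↦ univ)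
      (fun _ _ ↦ hv.lipschitzOnWith)
      (hIoo.mpr (by rw [abs_zero]; exact (abs_nonneg s).trans_lt (lt_min hT hT')))
      (fun t ht ↦ ⟨hγ T t ((hIoo.mp ht).trans_le (min_le_left _ _)), trivial⟩)
      (fun t ht ↦ ⟨hγ T' t ((hIoo.mp ht).trans_le (min_le_right _ _)), trivial⟩)
      (by rw [hγ₀, hγ₀]) (hIoo.mpr (lt_min hT hT'))
  refine ⟨fun t ↦ γ (|t| + 1) t, by simpa using hγ₀ 1, fun t ↦ ?_⟩
  have ht : |t| < |t| + 1 := lt_add_one _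
  have hnear : (fun s ↦ γ (|s| + 1) s) =ᶠ[nhds t] γ (|t| + 1) := by
    filter_upwards [(continuous_abs.isOpen_preimage _ isOpen_Iio).mem_nhds ht] with s hs
    exact agree _ _ s (lt_add_one _) hs
  simpa [hnear.eq_of_nhds] using (hγ _ t ht).congr_of_eventuallyEq hnear

theorem apply_eq_of_hasDerivAt_smul {I : E → ℝ} (hI : Differentiable ℝ I)
    (hIv : ∀ x, fderiv ℝ I x (v x) = 0) {γ : ℝ → E} {c : ℝ → ℝ}
    (hγ : ∀ t, HasDerivAt γ (c t • v (γ t)) t) (t : ℝ) : I (γ t) = I (γ 0) :=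
  have hIγ t := hasDerivAt_comp_of_fderiv_apply_eq_zero (hI _) (hIv _) (hγ t)
  is_const_of_deriv_eq_zero (fun t ↦ (hIγ t).differentiableAt) (fun t ↦ (hIγ t).deriv) t 0

theorem exists_hasDerivAt_of_firstIntegral [ProperSpace E] (hv : LocallyLipschitz v)
    {I : E → ℝ} (hI : Differentiable ℝ I) (hIv : ∀ x, fderiv ℝ I x (v x) = 0) (x₀ : E)
    (hbdd : Bornology.IsBounded {x | I x = I x₀}) :
    ∃ γ : ℝ → E, γ 0 = x₀ ∧ ∀ t, HasDerivAt γ (v (γ t)) t := by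
  obtain ⟨R, hR⟩ := isBounded_iff_forall_norm_le.mp hbdd
  have hcpt : IsCompact (closedBall (0 : E) (R + 1)) := isCompact_closedBall _ _
  obtain ⟨K, hK⟩ := hv.locallyLipschitzOn.exists_lipschitzOnWith_of_compact hcpt
  obtain ⟨C, hC⟩ := hcpt.exists_bound_of_continuousOn hv.continuous.continuousOn
  have hC' : ∀ x ∈ closedBall 0 (R + 1), ‖v x‖ ≤ C.toNNReal :=
    fun x hx ↦ (hC x hx).trans (Real.le_coe_toNNReal C)
  have hH := lipschitzWith_smul_of_eq_zero_of_notMem (lipschitzWith_normCutoff R)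
    (abs_normCutoff_le_one R) (fun x hx ↦ normCutoff_eq_zero_of_notMem_closedBall hx) hK hC'
  have hHC : ∀ x, ‖normCutoff R x • v x‖ ≤ C.toNNReal := fun x ↦ by
    by_cases hx : x ∈ closedBall 0 (R + 1)
    · rw [norm_smul, Real.norm_eq_abs]
      exact (mul_le_of_le_one_left (norm_nonneg _) (abs_normCutoff_le_one R x)).trans (hC' x hx)
    · simp [normCutoff_eq_zero_of_notMem_closedBall hx]
  obtain ⟨γ, hγ₀, hγ⟩ := exists_hasDerivAt_of_lipschitzWith hH hHC x₀
  have hγR t : ‖γ t‖ ≤ R :=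
    hR _ (by simp [apply_eq_of_hasDerivAt_smul hI hIv hγ t, hγ₀])
  exact ⟨γ, hγ₀, fun t ↦ by simpa [normCutoff_eq_one_of_norm_le (hγR t)] using hγ t⟩

noncomputable def I4r (r : ℝ) (v : Fin 3 → ℝ) : ℝ :=
  (v 0) ^ 2 + 1 / (r * (r - 1)) * ((r - 1) ^ 2 * (v 1) ^ 2 + (v 1 + r * v 2) ^ 2)

theorem contDiff_F4r (r : ℝ) : ContDiff ℝ 1 (F4r r) := by
  refine contDiff_pi.mpr fun i ↦ ?_
  fin_cases i <;>
    simp only [F4r, Fin.isValue, Fin.zero_eta, Fin.mk_one, Fin.reduceFinMk, Matrix.cons_val_zero,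
      Matrix.cons_val_one, Matrix.cons_val] <;>
    fun_prop

theorem differentiable_I4r (r : ℝ) : Differentiable ℝ (I4r r) := by
  unfold I4r; fun_prop

theorem fderiv_I4r_apply_F4r {r : ℝ} (h0 : r ≠ 0) (h1 : r ≠ 1) (x : Fin 3 → ℝ) :
    fderiv ℝ (I4r r) x (F4r r x) = 0 := by
  have hd : HasFDerivAt (I4r r) _ x := ((hasFDerivAt_apply 0 x).pow 2).add
    (((((hasFDerivAt_apply 1 x).pow 2).const_mul ((r - 1) ^ 2)).add
      (((hasFDerivAt_apply 1 x).add ((hasFDerivAt_apply (𝕜 := ℝ) 2 x).const_mul r)).pow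
        2)).const_mul (1 / (r * (r - 1))))
  have h1' : r - 1 ≠ 0 := sub_ne_zero.mpr h1
  rw [hd.fderiv]
  simp only [Fin.isValue, Nat.add_one_sub_one, pow_one, nsmul_eq_mul, Nat.cast_ofNat, one_div,
    mul_inv_rev, Pi.add_apply, smul_add, F4r, add_apply, smul_apply,
    ContinuousLinearMap.proj_apply, Matrix.cons_val_zero, smul_eq_mul, Matrix.cons_val_one,
    Matrix.cons_val]
  field_simp
  ring

theorem mul_I4r {r : ℝ} (h0 : r ≠ 0) (h1 : r ≠ 1) (v : Fin 3 → ℝ) :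
    r * (r - 1) * I4r r v =
      r * (r - 1) * (v 0) ^ 2 + (r - 1) ^ 2 * (v 1) ^ 2 + (v 1 + r * v 2) ^ 2 := by
  have : r - 1 ≠ 0 := sub_ne_zero.mpr h1
  unfold I4r; field_simp; ring

theorem sq_mul_sq_apply_le_I4r {r : ℝ} (hr : r < 0) (v : Fin 3 → ℝ) (i : Fin 3) :
    r ^ 2 * (v i) ^ 2 ≤ 2 * (1 - r + r ^ 2) * I4r r v := by
  have hrr : 0 < r * (r - 1) := mul_pos_of_neg_of_neg hr (by linarith)
  have key := mul_I4r hr.ne (by linarith) v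
  have h0 : (v 0) ^ 2 ≤ I4r r v :=
    le_of_mul_le_mul_left (by nlinarith [sq_nonneg (v 1), sq_nonneg (r - 1)]) hrr
  have h1 : (v 1) ^ 2 ≤ I4r r v :=
    le_of_mul_le_mul_left (by nlinarith [sq_nonneg (v 0), sq_nonneg (v 1)]) hrr
  have h12 : (v 1 + r * v 2) ^ 2 ≤ r * (r - 1) * I4r r v := by
    nlinarith [sq_nonneg (v 0), sq_nonneg (v 1), sq_nonneg (r - 1)]
  have hI : 0 ≤ I4r r v := (sq_nonneg _).trans h0
  have hκ : 0 ≤ (2 * (1 - r + r ^ 2) - r ^ 2) * I4r r v := mul_nonneg (by nlinarith) hI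
  fin_cases i <;> simp only [Fin.zero_eta, Fin.mk_one, Fin.reduceFinMk]
  · nlinarith [mul_le_mul_of_nonneg_left h0 (sq_nonneg r)]
  · nlinarith [mul_le_mul_of_nonneg_left h1 (sq_nonneg r)]
  -- `r z = (y + r z) - y`, so `r² z² ≤ 2 y² + 2 (y + r z)² ≤ 2 (1 + r (r - 1)) I`
  · nlinarith [sq_nonneg (v 1 + (v 1 + r * v 2))]

theorem I4r_pos {r : ℝ} (hr : r < 0) {v : Fin 3 → ℝ} (hv : v ≠ 0) : 0 < I4r r v := by
  obtain ⟨i, hi⟩ := Function.ne_iff.mp hv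
  have hvi : 0 < r ^ 2 * (v i) ^ 2 := by
    have := hr.ne
    simp only [Pi.zero_apply] at hi
    positivity
  exact pos_of_mul_pos_right (hvi.trans_le (sq_mul_sq_apply_le_I4r hr v i)) (by nlinarith)

theorem isBounded_setOf_I4r_eq {r : ℝ} (hr : r < 0) (c : ℝ) :
    Bornology.IsBounded {v | I4r r v = c} := by
  refine isBounded_iff_forall_norm_le.mpr
    ⟨√(2 * (1 - r + r ^ 2) * c / r ^ 2), fun v hv ↦ ?_⟩
  refine (pi_norm_le_iff_of_nonneg (Real.sqrt_nonneg _)).mpr fun i ↦ ?_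
  rw [Real.norm_eq_abs, ← hv.out]
  exact Real.abs_le_sqrt ((le_div_iff₀ (sq_pos_of_neg hr)).mpr
    (by linarith [sq_mul_sq_apply_le_I4r hr v i]))

/-- For `r < 0`, `I = x² + (1/(r(r−1)))((r−1)²y² + (y+rz)²)` is a
positive-definite first integral of `F₄ᵣ`; hence `F₄ᵣ` is complete. -/
theorem stmt_8 (r : ℝ) (hr : r < 0) :
    (∀ (γ : ℝ → Fin 3 → ℝ) (t : ℝ), HasDerivAt γ (F4r r (γ t)) t →
        HasDerivAt (fun u => (γ u 0) ^ 2 +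
          1 / (r * (r - 1)) * ((r - 1) ^ 2 * (γ u 1) ^ 2 + (γ u 1 + r * γ u 2) ^ 2)) 0 t) ∧
    (∀ v : Fin 3 → ℝ, v ≠ 0 →
        0 < (v 0) ^ 2 + 1 / (r * (r - 1)) * ((r - 1) ^ 2 * (v 1) ^ 2 + (v 1 + r * v 2) ^ 2)) ∧
    (∀ v : Fin 3 → ℝ, ∃ γ : ℝ → Fin 3 → ℝ, γ 0 = v ∧
        ∀ t, HasDerivAt γ (F4r r (γ t)) t) := by
  have hdI := fderiv_I4r_apply_F4r hr.ne (by linarith : r ≠ 1)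
  refine ⟨fun γ t hγ ↦ ?_, fun v hv ↦ I4r_pos hr hv, fun v ↦ ?_⟩
  · exact hasDerivAt_comp_of_fderiv_apply_eq_zero (c := 1) (differentiable_I4r r _) (hdI _)
      (by rwa [one_smul])
  · exact exists_hasDerivAt_of_firstIntegral (contDiff_F4r r).locallyLipschitz
      (differentiable_I4r r) hdI v (isBounded_setOf_I4r_eq hr _)
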